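/- arXiv:nlin/0601001 — 2 statements merged into one kernel-verified Lean document; each statement's English description precedes it below -/
import Mathlib

section
/- Let A(f) be a δ-compatible WNA algebra, i.e. there exist derivations δₙ (n ≥ 1) of the subalgebra generated by f with δₙ(f) = f ∘ₙ f. Then the derivations δₙ pairwise commute on A(f). In particular the key identity f ∘ₘ pₙ + pₘ is symmetric: pₘ ∘ₙ f + f ∘ₙ pₘ = pₙ ∘ₘ f + f ∘ₘ pₙ, where pₖ := f ∘ₖ f. -/
/-- Derived products: `circ f (n-1) a b` is `a ∘ₙ b`. -/
def circ {A : Type*} [NonUnitalNonAssocRing A] (f : A) : ℕ → A → A → A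
  | 0, a, b => a * b
  | n+1, a, b => a * circ f n f b - circ f n (a * f) b

section Aux

variable {A : Type*} [NonUnitalNonAssocRing A]

lemma circ_add_left (f : A) : ∀ n (u v b : A),
    circ f n (u + v) b = circ f n u b + circ f n v b
  | 0, u, v, b => add_mul u v b
  | n+1, u, v, b => by
    simp only [circ, add_mul, circ_add_left f n]
    abel

lemma circ_sub_left (f : A) : ∀ n (u v b : A),
    circ f n (u - v) b = circ f n u b - circ f n v b
  | 0, u, v, b => sub_mul u v b
  | n+1, u, v, b => by
    simp only [circ, sub_mul, circ_sub_left f n]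
    abel

lemma circ_mul_prod (hW : ∀ a b c d : A, a * (b * c) * d = a * (b * c * d)) (f : A) :
    ∀ n (a b x y : A), circ f n (a * (x * y)) b = a * circ f n (x * y) b
  | 0, a, b, x, y => hW a x y b
  | n+1, a, b, x, y => by
    simp only [circ]
    rw [show a * (x * y) * circ f n f b = a * (x * y * circ f n f b) from
          hW a x y (circ f n f b),
        show a * (x * y) * f = a * (x * y * f) from hW a x y f,
        circ_mul_prod hW f n a b (x * y) f, mul_sub]

lemma circ_mul_circ (hW : ∀ a b c d : A, a * (b * c) * d = a * (b * c * d)) (f : A) :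
    ∀ m n (a b x y : A),
      circ f n (a * circ f m x y) b = a * circ f n (circ f m x y) b
  | 0, n, a, b, x, y => circ_mul_prod hW f n a b x y
  | m+1, n, a, b, x, y => by
    simp only [circ]
    rw [mul_sub, circ_sub_left, circ_sub_left, circ_mul_prod hW f n a b x (circ f m f y),
        circ_mul_circ hW f m n a b (x * f) y, mul_sub]

lemma circ_key (hW : ∀ a b c d : A, a * (b * c) * d = a * (b * c * d)) (f : A) :
    ∀ m n (a : A),
      circ f m a (circ f n f f) - circ f n (circ f m a f) f = circ f (m+n+1) a f
  | 0, n, a => by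
    rw [Nat.zero_add]
    simp only [circ]
  | m+1, n, a => by
    have e : m + 1 + n = m + n + 1 := by omega
    have h1 := circ_key hW f m n f
    have h2 := circ_key hW f m n (a * f)
    have h3 := circ_mul_circ hW f m n a f f f
    simp only [circ, e]
    simp only [circ] at h1 h2
    rw [circ_sub_left, h3, ← h1, ← h2, mul_sub]
    abel

lemma deriv_circ (f : A) (δ : A →+ A) (hder : ∀ x y : A, δ (x*y) = δ x * y + x * δ y)
    (hp : ∀ k (a b : A), circ f k (a * δ f) b = a * circ f k (δ f) b) :
    ∀ n (a b : A), δ (circ f n a b) = circ f n (δ a) b + circ f n a (δ b)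
  | 0, a, b => hder a b
  | n+1, a, b => by
    simp only [circ, map_sub]
    rw [hder a (circ f n f b), deriv_circ f δ hder hp n f b,
        deriv_circ f δ hder hp n (a*f) b, hder a f, circ_add_left, hp n, mul_add]
    abel

end Aux

/-- In a δ-compatible WNA algebra `A(f)` (derivations `δₙ` with `δₙ(f) = f ∘ₙ f =: pₙ`,
here `δ n` is `δ_{n+1}` and `circ f n f f` is `p_{n+1}`), the derivations pairwise
commute on the subalgebra generated by `f`, and
`pₘ ∘ₙ f + f ∘ₙ pₘ = pₙ ∘ₘ f + f ∘ₘ pₙ`. -/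
theorem derivations_commute {A : Type*} [NonUnitalNonAssocRing A]
    (hW : ∀ a b c d : A, a * (b * c) * d = a * (b * c * d)) (f : A)
    (δ : ℕ → A →+ A)
    (hder : ∀ n, ∀ x y : A, δ n (x * y) = δ n x * y + x * δ n y)
    (hval : ∀ n, δ n f = circ f n f f)
    (hinv : ∀ n, ∀ x ∈ NonUnitalSubring.closure ({f} : Set A),
      δ n x ∈ NonUnitalSubring.closure ({f} : Set A)) :
    (∀ m n, ∀ x ∈ NonUnitalSubring.closure ({f} : Set A),
      δ m (δ n x) = δ n (δ m x)) ∧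
    (∀ m n : ℕ,
      circ f n (circ f m f f) f + circ f n f (circ f m f f)
        = circ f m (circ f n f f) f + circ f m f (circ f n f f)) := by
  have part2 : ∀ m n : ℕ,
      circ f n (circ f m f f) f + circ f n f (circ f m f f)
        = circ f m (circ f n f f) f + circ f m f (circ f n f f) := by
    intro m n
    have h1 := circ_key hW f m n f
    have h2 := circ_key hW f n m f
    rw [show n + m + 1 = m + n + 1 by omega] at h2
    have h4 : circ f n (circ f m f f) f + circ f n f (circ f m f f)
        - (circ f m (circ f n f f) f + circ f m f (circ f n f f))
        = (circ f n f (circ f m f f) - circ f m (circ f n f f) f)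
          - (circ f m f (circ f n f f) - circ f n (circ f m f f) f) := by abel
    rw [h1, h2, sub_self] at h4
    exact sub_eq_zero.mp h4
  refine ⟨?_, part2⟩
  intro m n x hx
  induction hx using NonUnitalSubring.closure_induction with
  | mem x hx =>
    rw [Set.mem_singleton_iff.mp hx]
    have hp : ∀ k, ∀ (a b : A), circ f k (a * δ m f) b = a * circ f k (δ m f) b := by
      intro k a b
      rw [hval m]
      exact circ_mul_circ hW f m k a b f f
    have hp' : ∀ k, ∀ (a b : A), circ f k (a * δ n f) b = a * circ f k (δ n f) b := by
      intro k a b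
      rw [hval n]
      exact circ_mul_circ hW f n k a b f f
    rw [hval n, deriv_circ f (δ m) (hder m) hp n f f, hval m,
        deriv_circ f (δ n) (hder n) hp' m f f, hval n]
    exact part2 m n
  | zero => simp
  | add x y hx hy ihx ihy => simp [ihx, ihy]
  | neg x hx ih => simp [ih]
  | mul x y hx hy ihx ihy =>
    rw [hder n x y, map_add, hder m x y, map_add, hder m (δ n x) y, hder m x (δ n y),
        hder n (δ m x) y, hder n x (δ m y), ihx, ihy]
    abel
end

section
/- In a δ-compatible WNA algebra A(f), for all m,n ≥ 1 and a ∈ A(f): [δₙ, R_f^{(m)}](a) = (a ∘ₘ f) ∘ₙ f + a ∘_{m+n} f, where R_f^{(m)}(a) := a ∘ₘ f. -/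
section aux

variable {A : Type*} [NonUnitalNonAssocRing A]

lemma circ_succ (f : A) (m : ℕ) (a b : A) :
    circ f (m+1) a b = a * circ f m f b - circ f m (a * f) b := rfl

lemma circ_add_left_s12 (f : A) (m : ℕ) (x y b : A) :
    circ f m (x + y) b = circ f m x b + circ f m y b := by
  induction m generalizing x y with
  | zero => simp [circ, add_mul]
  | succ m ih => simp only [circ, add_mul, ih]; abel

lemma circ_sub_left_s12 (f : A) (m : ℕ) (x y b : A) :
    circ f m (x - y) b = circ f m x b - circ f m y b := by
  induction m generalizing x y with
  | zero => simp [circ, sub_mul]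
  | succ m ih => simp only [circ, sub_mul, ih]; abel

/-- `x` associates as a middle factor. -/
def Pmid (x : A) : Prop := ∀ a d : A, a * x * d = a * (x * d)

lemma Pmid_circ (hW : ∀ a b c d : A, a * (b * c) * d = a * (b * c * d))
    (f : A) (m : ℕ) (x : A) : Pmid (circ f m x f) := by
  induction m generalizing x with
  | zero => exact fun a d => hW a x f d
  | succ m ih =>
    intro a d
    simp only [circ, mul_sub, sub_mul, hW, ih _ a d]

lemma circ_mul_comm (hW : ∀ a b c d : A, a * (b * c) * d = a * (b * c * d))
    (f : A) (m : ℕ) (x : A) (hx : Pmid x) (a : A) :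
    a * circ f m x f = circ f m (a * x) f := by
  induction m generalizing x a with
  | zero => exact (hx a f).symm
  | succ m ih =>
    simp only [circ, mul_sub]
    rw [ih (x * f) (fun u d => hW u x f d) a, ← hx a f, ← hx a (circ f m f f)]

lemma key (hW : ∀ a b c d : A, a * (b * c) * d = a * (b * c * d)) (f : A)
    (δ : ℕ → A →+ A)
    (hder : ∀ n, ∀ x y : A, δ n (x * y) = δ n x * y + x * δ n y)
    (hval : ∀ n, δ n f = circ f n f f) :
    ∀ (m n : ℕ) (a : A),
      δ n (circ f m a f) - circ f m (δ n a) f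
        = circ f n (circ f m a f) f + circ f (m + n + 1) a f := by
  intro m
  induction m with
  | zero =>
    intro n a
    simp only [circ, Nat.zero_add]
    rw [hder n a f, hval n]
    abel
  | succ m ih =>
    intro n a
    have hcomm1 : a * circ f m (δ n f) f = circ f m (a * δ n f) f := by
      rw [hval n]
      exact circ_mul_comm hW f m _ (Pmid_circ hW f n f) a
    have hcomm2 : a * circ f n (circ f m f f) f = circ f n (a * circ f m f f) f :=
      circ_mul_comm hW f n _ (Pmid_circ hW f m f) a
    have h1 := eq_add_of_sub_eq (ih n f)
    have h2 := eq_add_of_sub_eq (ih n (a * f))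
    simp only [circ_succ]
    have hidx : m + 1 + n = m + n + 1 := by omega
    rw [hidx]
    rw [map_sub, hder n a (circ f m f f), circ_sub_left_s12 f n, h1, h2,
      hder n a f, circ_add_left_s12 f m, mul_add, mul_add, hcomm1, hcomm2]
    abel

end aux

/-- In a δ-compatible WNA algebra `A(f)`:
`[δₙ, R_f^{(m)}](a) = (a ∘ₘ f) ∘ₙ f + a ∘_{m+n} f` on `A(f)`.
(Here `δ n` is `δ_{n+1}`, `circ f m · f` is `R_f^{(m+1)}`, and
`∘_{(m+1)+(n+1)}` is `circ f (m+n+1)`.) -/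
theorem delta_rmul_commutator {A : Type*} [NonUnitalNonAssocRing A]
    (hW : ∀ a b c d : A, a * (b * c) * d = a * (b * c * d)) (f : A)
    (δ : ℕ → A →+ A)
    (hder : ∀ n, ∀ x y : A, δ n (x * y) = δ n x * y + x * δ n y)
    (hval : ∀ n, δ n f = circ f n f f) :
    ∀ (m n : ℕ) (a : A), a ∈ NonUnitalSubring.closure ({f} : Set A) →
      δ n (circ f m a f) - circ f m (δ n a) f
        = circ f n (circ f m a f) f + circ f (m + n + 1) a f := by
  intro m n a _
  exact key hW f δ hder hval m n a
end
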